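/- Let S and r be parameters with 0 < S < 4r, and let u₀ be the standing wave. If h : ℝ → ℝ is a bounded, twice continuously differentiable function satisfying (Lh)(x) = 0 for all x ∈ ℝ, then there exists a real number μ such that h(x) = μ·u₀'(x) for all x ∈ ℝ. -/

import Mathlib

/-! Differentiating the standing-wave equation shows that `u₀'` lies in the kernel of `L`
(translation invariance). For two kernel elements, Abel's identity makes the Wronskian weighted by
`exp ((4S/r)(u₀² - u₀))` constant. Along points `x → ∞` where the mean value theorem bounds `h'`,
that weighted Wronskian of `u₀'` and `h` tends to `0`, because `h` is bounded and `u₀'`, `u₀''` tend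
to `0` (`u₀'` is monotone for `x ≥ 0`, where `u₀ < 1/2` forces `u₀'' > 0`). Hence it vanishes,
and `h / u₀'` is constant: `u₀' ≤ 0` is strictly monotone on each side of `0`, so it never
vanishes. -/

open Real Filter Topology

noncomputable def fpoly (u : ℝ) : ℝ := u * (2 * u - 1) * (1 - u)

noncomputable def Lop (S r : ℝ) (u₀ h : ℝ → ℝ) : ℝ → ℝ := fun x =>
  deriv (deriv h) x + (4 * S / r) * deriv u₀ x * (2 * u₀ x - 1) * deriv h x
    + S * (deriv fpoly (u₀ x) + (4 / r) * (deriv u₀ x) ^ 2) * h x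

open Set

noncomputable def wronskian (y z : ℝ → ℝ) (x : ℝ) : ℝ := y x * deriv z x - deriv y x * z x

section LinearODE

variable {p q y z : ℝ → ℝ}

theorem hasDerivAt_wronskian (hy : Differentiable ℝ y) (hy' : Differentiable ℝ (deriv y))
    (hz : Differentiable ℝ z) (hz' : Differentiable ℝ (deriv z))
    (hLy : ∀ x, deriv (deriv y) x + p x * deriv y x + q x * y x = 0)
    (hLz : ∀ x, deriv (deriv z) x + p x * deriv z x + q x * z x = 0) (x : ℝ) :
    HasDerivAt (wronskian y z) (-(p x * wronskian y z x)) x := by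
  refine (((hy x).hasDerivAt.mul (hz' x).hasDerivAt).sub
    ((hy' x).hasDerivAt.mul (hz x).hasDerivAt)).congr_deriv ?_
  rw [wronskian]
  linear_combination y x * hLz x - z x * hLy x

theorem exp_mul_wronskian_eq {P : ℝ → ℝ} (hP : ∀ x, HasDerivAt P (p x) x)
    (hy : Differentiable ℝ y) (hy' : Differentiable ℝ (deriv y))
    (hz : Differentiable ℝ z) (hz' : Differentiable ℝ (deriv z))
    (hLy : ∀ x, deriv (deriv y) x + p x * deriv y x + q x * y x = 0)
    (hLz : ∀ x, deriv (deriv z) x + p x * deriv z x + q x * z x = 0) (x : ℝ) :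
    exp (P x) * wronskian y z x = exp (P 0) * wronskian y z 0 := by
  have hderiv : ∀ x, HasDerivAt (fun x ↦ exp (P x) * wronskian y z x) 0 x := fun x ↦ by
    refine ((hP x).exp.mul (hasDerivAt_wronskian hy hy' hz hz' hLy hLz x)).congr_deriv ?_
    ring
  exact is_const_of_deriv_eq_zero (fun x ↦ (hderiv x).differentiableAt)
    (fun x ↦ (hderiv x).deriv) x 0

theorem exists_eq_const_mul_of_wronskian_eq_zero (hy : Differentiable ℝ y)
    (hz : Differentiable ℝ z) (hy0 : ∀ x, y x ≠ 0) (hW : ∀ x, wronskian y z x = 0) :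
    ∃ μ, ∀ x, z x = μ * y x := by
  have hderiv : ∀ x, HasDerivAt (fun x ↦ z x / y x) 0 x := fun x ↦ by
    refine ((hz x).hasDerivAt.div (hy x).hasDerivAt (hy0 x)).congr_deriv ?_
    rw [div_eq_zero_iff, ← hW x, wronskian]
    left; ring
  refine ⟨z 0 / y 0, fun x ↦ ?_⟩
  rw [← is_const_of_deriv_eq_zero (fun x ↦ (hderiv x).differentiableAt)
    (fun x ↦ (hderiv x).deriv) x 0, div_mul_cancel₀ _ (hy0 x)]

end LinearODE

theorem frequently_abs_deriv_le {f : ℝ → ℝ} {M : ℝ} (hf : Differentiable ℝ f)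
    (hM : ∀ x, |f x| ≤ M) : ∃ᶠ x in atTop, |deriv f x| ≤ 2 * M := by
  refine frequently_atTop.2 fun a ↦ ?_
  obtain ⟨c, hc, hfc⟩ := exists_deriv_eq_slope f (lt_add_one a) hf.continuous.continuousOn
    (fun x _ ↦ (hf x).differentiableWithinAt)
  refine ⟨c, hc.1.le, ?_⟩
  rw [hfc, add_sub_cancel_left, div_one]
  linarith [abs_sub (f (a + 1)) (f a), hM (a + 1), hM a]

theorem tendsto_deriv_atTop_zero_of_monotoneOn {f : ℝ → ℝ} {a l : ℝ} (hf : Differentiable ℝ f)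
    (hmono : MonotoneOn (deriv f) (Ici a)) (hlim : Tendsto f atTop (𝓝 l)) :
    Tendsto (deriv f) atTop (𝓝 0) := by
  have hslope : ∀ x, ∃ c ∈ Ioo x (x + 1), deriv f c = f (x + 1) - f x := fun x ↦ by
    obtain ⟨c, hc, hfc⟩ := exists_deriv_eq_slope f (lt_add_one x) hf.continuous.continuousOn
      (fun x _ ↦ (hf x).differentiableWithinAt)
    exact ⟨c, hc, by rw [hfc, add_sub_cancel_left, div_one]⟩
  have hshift : ∀ b : ℝ, Tendsto (fun x ↦ f (x + b)) atTop (𝓝 l) := fun b ↦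
    hlim.comp (tendsto_atTop_add_const_right _ b tendsto_id)
  have hincr : Tendsto (fun x ↦ f (x + 1) - f x) atTop (𝓝 0) := by
    simpa using (hshift 1).sub hlim
  have hdecr : Tendsto (fun x ↦ f x - f (x + -1)) atTop (𝓝 0) := by
    simpa using hlim.sub (hshift (-1))
  refine tendsto_of_tendsto_of_tendsto_of_le_of_le' hdecr hincr ?_ ?_
  · filter_upwards [eventually_ge_atTop (a + 1)] with x hx
    obtain ⟨c, hc, hfc⟩ := hslope (x + -1)
    rw [neg_add_cancel_right] at hfc
    rw [← hfc]
    exact hmono (by simp only [mem_Ici]; linarith [hc.1]) (by simp only [mem_Ici]; linarith)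
      (by linarith [hc.2])
  · filter_upwards [eventually_ge_atTop a] with x hx
    obtain ⟨c, hc, hfc⟩ := hslope x
    rw [← hfc]
    exact hmono hx (by simp only [mem_Ici]; linarith [hc.1]) hc.1.le

theorem eq_zero_of_forall_mul_wronskian_eq {E y z : ℝ → ℝ} {C K M : ℝ}
    (hz : Differentiable ℝ z) (hzM : ∀ x, |z x| ≤ M) (hEK : ∀ x, |E x| ≤ K)
    (hy : Tendsto y atTop (𝓝 0)) (hy' : Tendsto (deriv y) atTop (𝓝 0))
    (hC : ∀ x, E x * wronskian y z x = C) : C = 0 := by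
  have hK : 0 ≤ K := (abs_nonneg _).trans (hEK 0)
  have hM : 0 ≤ M := (abs_nonneg _).trans (hzM 0)
  have hbound : ∃ᶠ x in atTop, |C| ≤ K * (|y x| * (2 * M) + |deriv y x| * M) := by
    refine (frequently_abs_deriv_le hz hzM).mono fun x hx ↦ ?_
    rw [← hC x, abs_mul, wronskian]
    gcongr
    · exact hEK x
    · refine (abs_sub _ _).trans ?_
      rw [abs_mul, abs_mul]
      exact add_le_add (mul_le_mul_of_nonneg_left hx (abs_nonneg _))
        (mul_le_mul_of_nonneg_left (hzM x) (abs_nonneg _))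
  have hlim : Tendsto (fun x ↦ K * (|y x| * (2 * M) + |deriv y x| * M)) atTop (𝓝 0) := by
    simpa using ((hy.abs.mul_const _).add (hy'.abs.mul_const _)).const_mul K
  by_contra hC0
  obtain ⟨x, hx, hx'⟩ :=
    (hbound.and_eventually (hlim.eventually (gt_mem_nhds (abs_pos.2 hC0)))).exists
  exact hx.not_gt hx'

theorem deriv_neg_of_strictMonoOn_of_strictAntiOn {f : ℝ → ℝ} {a : ℝ} (hf : Antitone f)
    (hmono : StrictMonoOn (deriv f) (Ici a)) (hanti : StrictAntiOn (deriv f) (Iic a)) (x : ℝ) :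
    deriv f x < 0 := by
  rcases le_total a x with hx | hx
  · exact (hmono hx (by simp only [mem_Ici]; linarith) (lt_add_one x)).trans_le hf.deriv_nonpos
  · exact (hanti (by simp only [mem_Iic]; linarith) hx (sub_one_lt x)).trans_le hf.deriv_nonpos
theorem differentiable_fpoly : Differentiable ℝ fpoly := by
  unfold fpoly; fun_prop

theorem fpoly_neg {u : ℝ} (h₀ : 0 < u) (h₁ : u < 1 / 2) : fpoly u < 0 :=
  mul_neg_of_neg_of_pos (mul_neg_of_pos_of_neg h₀ (by linarith)) (by linarith)

theorem fpoly_pos {u : ℝ} (h₀ : 1 / 2 < u) (h₁ : u < 1) : 0 < fpoly u :=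
  mul_pos (mul_pos (by linarith) (by linarith)) (by linarith)

section StandingWave

variable {S r : ℝ} {u₀ : ℝ → ℝ}

theorem deriv_deriv_eq_of_ode
    (hode : ∀ x, deriv (deriv u₀) x + S * fpoly (u₀ x)
      + (2 * S / r) * (2 * u₀ x - 1) * (deriv u₀ x) ^ 2 = 0) :
    deriv (deriv u₀) = fun x ↦
      -(S * fpoly (u₀ x)) - 2 * S / r * (2 * u₀ x - 1) * deriv u₀ x ^ 2 :=
  funext fun x ↦ by linear_combination hode x

theorem deriv_deriv_pos_of_ode (hS : 0 < S) (hr : 0 < r)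
    (hode : ∀ x, deriv (deriv u₀) x + S * fpoly (u₀ x)
      + (2 * S / r) * (2 * u₀ x - 1) * (deriv u₀ x) ^ 2 = 0)
    {x : ℝ} (h₀ : 0 < u₀ x) (h₁ : u₀ x < 1 / 2) : 0 < deriv (deriv u₀) x := by
  have hf := mul_neg_of_pos_of_neg hS (fpoly_neg h₀ h₁)
  have hdrag : 2 * S / r * (2 * u₀ x - 1) * deriv u₀ x ^ 2 ≤ 0 :=
    mul_nonpos_of_nonpos_of_nonneg
      (mul_nonpos_of_nonneg_of_nonpos (by positivity) (by linarith)) (sq_nonneg _)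
  linarith [hode x]

theorem deriv_deriv_neg_of_ode (hS : 0 < S) (hr : 0 < r)
    (hode : ∀ x, deriv (deriv u₀) x + S * fpoly (u₀ x)
      + (2 * S / r) * (2 * u₀ x - 1) * (deriv u₀ x) ^ 2 = 0)
    {x : ℝ} (h₀ : 1 / 2 < u₀ x) (h₁ : u₀ x < 1) : deriv (deriv u₀) x < 0 := by
  have hf := mul_pos hS (fpoly_pos h₀ h₁)
  have hdrag : 0 ≤ 2 * S / r * (2 * u₀ x - 1) * deriv u₀ x ^ 2 :=
    mul_nonneg (mul_nonneg (by positivity) (by linarith)) (sq_nonneg _)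
  linarith [hode x]

theorem hasDerivAt_deriv_deriv_of_ode (hu : ContDiff ℝ 2 u₀)
    (hode : ∀ x, deriv (deriv u₀) x + S * fpoly (u₀ x)
      + (2 * S / r) * (2 * u₀ x - 1) * (deriv u₀ x) ^ 2 = 0) (x : ℝ) :
    HasDerivAt (deriv (deriv u₀))
      (-(4 * S / r * deriv u₀ x * (2 * u₀ x - 1) * deriv (deriv u₀) x)
        - S * (deriv fpoly (u₀ x) + 4 / r * deriv u₀ x ^ 2) * deriv u₀ x) x := by
  have hu₀ : HasDerivAt u₀ (deriv u₀ x) x := (hu.differentiable two_ne_zero x).hasDerivAt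
  have hψ : HasDerivAt (deriv u₀) (deriv (deriv u₀) x) x :=
    ((hu.iterate_deriv' 1 1).differentiable one_ne_zero x).hasDerivAt
  have hf : HasDerivAt (fun x ↦ fpoly (u₀ x)) (deriv fpoly (u₀ x) * deriv u₀ x) x :=
    (differentiable_fpoly _).hasDerivAt.comp x hu₀
  rw [deriv_deriv_eq_of_ode hode]
  refine ((hf.const_mul S).neg.sub ((((hu₀.const_mul 2).sub_const 1).const_mul (2 * S / r)).mul
    (hψ.pow 2))).congr_deriv ?_
  simp only [Pi.pow_apply]
  linear_combination -(4 * S / r * deriv u₀ x * (2 * u₀ x - 1)) * hode x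

theorem lop_deriv_eq_zero (hu : ContDiff ℝ 2 u₀)
    (hode : ∀ x, deriv (deriv u₀) x + S * fpoly (u₀ x)
      + (2 * S / r) * (2 * u₀ x - 1) * (deriv u₀ x) ^ 2 = 0) (x : ℝ) :
    Lop S r u₀ (deriv u₀) x = 0 := by
  rw [Lop, (hasDerivAt_deriv_deriv_of_ode hu hode x).deriv]
  ring

theorem strictMonoOn_deriv_Ici_of_ode (hS : 0 < S) (hr : 0 < r) (hu : ContDiff ℝ 2 u₀)
    (hode : ∀ x, deriv (deriv u₀) x + S * fpoly (u₀ x)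
      + (2 * S / r) * (2 * u₀ x - 1) * (deriv u₀ x) ^ 2 = 0)
    (hnorm : u₀ 0 = 1 / 2) (hmono : StrictAnti u₀) (hpos : ∀ x, 0 < u₀ x) :
    StrictMonoOn (deriv u₀) (Ici 0) := by
  refine strictMonoOn_of_deriv_pos (convex_Ici 0) (hu.continuous_deriv one_le_two).continuousOn
    fun x hx ↦ ?_
  rw [interior_Ici] at hx
  exact deriv_deriv_pos_of_ode hS hr hode (hpos x) (hnorm ▸ hmono hx)

theorem strictAntiOn_deriv_Iic_of_ode (hS : 0 < S) (hr : 0 < r) (hu : ContDiff ℝ 2 u₀)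
    (hode : ∀ x, deriv (deriv u₀) x + S * fpoly (u₀ x)
      + (2 * S / r) * (2 * u₀ x - 1) * (deriv u₀ x) ^ 2 = 0)
    (hnorm : u₀ 0 = 1 / 2) (hmono : StrictAnti u₀) (hlt : ∀ x, u₀ x < 1) :
    StrictAntiOn (deriv u₀) (Iic 0) := by
  refine strictAntiOn_of_deriv_neg (convex_Iic 0) (hu.continuous_deriv one_le_two).continuousOn
    fun x hx ↦ ?_
  rw [interior_Iic] at hx
  exact deriv_deriv_neg_of_ode hS hr hode (hnorm ▸ hmono hx) (hlt x)

theorem tendsto_deriv_deriv_of_ode (hode : ∀ x, deriv (deriv u₀) x + S * fpoly (u₀ x)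
      + (2 * S / r) * (2 * u₀ x - 1) * (deriv u₀ x) ^ 2 = 0)
    (hlim : Tendsto u₀ atTop (𝓝 0)) (hψ : Tendsto (deriv u₀) atTop (𝓝 0)) :
    Tendsto (deriv (deriv u₀)) atTop (𝓝 0) := by
  have hf : Tendsto (fun x ↦ fpoly (u₀ x)) atTop (𝓝 0) := by
    have := (differentiable_fpoly.continuous.tendsto 0).comp hlim
    rwa [show fpoly 0 = 0 by norm_num [fpoly]] at this
  rw [deriv_deriv_eq_of_ode hode]
  simpa using (hf.const_mul S).neg.sub (((hlim.const_mul 2).sub_const 1).const_mul (2 * S / r)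
    |>.mul (hψ.pow 2))

end StandingWave

theorem kernel_of_L (S r : ℝ) (hS : 0 < S) (hSr : S < 4 * r)
    (u₀ : ℝ → ℝ) (hu : ContDiff ℝ 2 u₀)
    (hode : ∀ x : ℝ, deriv (deriv u₀) x + S * fpoly (u₀ x)
      + (2 * S / r) * (2 * u₀ x - 1) * (deriv u₀ x) ^ 2 = 0)
    (hlim0 : Tendsto u₀ atTop (𝓝 0))
    (hnorm : u₀ 0 = 1 / 2) (hmono : StrictAnti u₀)
    (hbound : ∀ x : ℝ, 0 < u₀ x ∧ u₀ x < 1)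
    (h : ℝ → ℝ) (hh : ContDiff ℝ 2 h) (hhb : ∃ M : ℝ, ∀ x : ℝ, |h x| ≤ M)
    (hker : ∀ x : ℝ, Lop S r u₀ h x = 0) :
    ∃ μ : ℝ, ∀ x : ℝ, h x = μ * deriv u₀ x := by
  have hr : 0 < r := by linarith
  obtain ⟨M, hM⟩ := hhb
  have hud : Differentiable ℝ u₀ := hu.differentiable two_ne_zero
  have hψ : Differentiable ℝ (deriv u₀) := (hu.iterate_deriv' 1 1).differentiable one_ne_zero
  have hψ' : Differentiable ℝ (deriv (deriv u₀)) :=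
    fun x ↦ (hasDerivAt_deriv_deriv_of_ode hu hode x).differentiableAt
  have hhd : Differentiable ℝ h := hh.differentiable two_ne_zero
  have hh' : Differentiable ℝ (deriv h) := (hh.iterate_deriv' 1 1).differentiable one_ne_zero
  have hψ_mono := strictMonoOn_deriv_Ici_of_ode hS hr hu hode hnorm hmono fun x ↦ (hbound x).1
  have hψ_neg : ∀ x, deriv u₀ x < 0 := deriv_neg_of_strictMonoOn_of_strictAntiOn hmono.antitone
    hψ_mono (strictAntiOn_deriv_Iic_of_ode hS hr hu hode hnorm hmono fun x ↦ (hbound x).2)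
  have hψ_lim : Tendsto (deriv u₀) atTop (𝓝 0) :=
    tendsto_deriv_atTop_zero_of_monotoneOn hud hψ_mono.monotoneOn hlim0
  -- `exp P` is the integrating factor of the first-order coefficient of `Lop`.
  set P : ℝ → ℝ := fun x ↦ 4 * S / r * (u₀ x ^ 2 - u₀ x)
  have hP : ∀ x, HasDerivAt P (4 * S / r * deriv u₀ x * (2 * u₀ x - 1)) x := fun x ↦
    ((((hud x).hasDerivAt.pow 2).sub (hud x).hasDerivAt).const_mul _).congr_deriv (by ring)
  have hP_le : ∀ x, |exp (P x)| ≤ 1 := fun x ↦ by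
    rw [abs_exp, exp_le_one_iff]
    exact mul_nonpos_of_nonneg_of_nonpos (by positivity) (by nlinarith [hbound x])
  have hAbel := exp_mul_wronskian_eq hP hψ hψ' hhd hh' (lop_deriv_eq_zero hu hode) hker
  have hC := eq_zero_of_forall_mul_wronskian_eq hhd hM hP_le hψ_lim
    (tendsto_deriv_deriv_of_ode hode hlim0 hψ_lim) hAbel
  exact exists_eq_const_mul_of_wronskian_eq_zero hψ hhd (fun x ↦ (hψ_neg x).ne) fun x ↦ by
    simpa [hC, exp_ne_zero] using hAbel x
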